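/- arXiv:1410.6030 — 12 statements merged into one kernel-verified Lean document; each statement's English description precedes it below -/
import Mathlib

section
/- If f is posimodular, then the family of extreme sets of f is laminar: any two extreme sets X, Y satisfy X ∩ Y = ∅, X ⊆ Y, or Y ⊆ X. -/
namespace Finset

variable {V β : Type*} [DecidableEq V]

def IsPosimodular [Add β] [LE β] (f : Finset V → β) : Prop :=
  ∀ X Y : Finset V, f (X \ Y) + f (Y \ X) ≤ f X + f Y

def IsExtreme [LT β] (f : Finset V → β) (X : Finset V) : Prop :=
  X.Nonempty ∧ ∀ Z : Finset V, Z.Nonempty → Z ⊂ X → f X < f Z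

theorem sdiff_ssubset_left_of_inter_nonempty {X Y : Finset V} (h : (X ∩ Y).Nonempty) :
    X \ Y ⊂ X :=
  sdiff_lt_left.2 (not_disjoint_iff_nonempty_inter.2 (inter_comm X Y ▸ h))

theorem IsExtreme.lt_sdiff [LT β] {f : Finset V → β} {X Y : Finset V} (hX : IsExtreme f X)
    (hXY : ¬X ⊆ Y) (hinter : (X ∩ Y).Nonempty) : f X < f (X \ Y) :=
  hX.2 _ (sdiff_nonempty.2 hXY) (sdiff_ssubset_left_of_inter_nonempty hinter)

theorem IsPosimodular.isExtreme_laminar [AddCommMonoid β] [PartialOrder β]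
    [IsOrderedCancelAddMonoid β] {f : Finset V → β} (hf : IsPosimodular f) {X Y : Finset V}
    (hX : IsExtreme f X) (hY : IsExtreme f Y) : X ∩ Y = ∅ ∨ X ⊆ Y ∨ Y ⊆ X := by
  by_contra! ⟨hinter, hXY, hYX⟩
  have hlt : f X + f Y < f (X \ Y) + f (Y \ X) :=
    add_lt_add (hX.lt_sdiff hXY hinter) (hY.lt_sdiff hYX (inter_comm X Y ▸ hinter))
  exact (hf X Y).not_gt hlt

end Finset

theorem stmt_1_general (V : Type*) [DecidableEq V] (f : Finset V → ℝ)
    (hpos : ∀ X Y : Finset V, f X + f Y ≥ f (X \ Y) + f (Y \ X))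
    (X Y : Finset V)
    (hX : X.Nonempty ∧ ∀ Z : Finset V, Z.Nonempty → Z ⊂ X → f Z > f X)
    (hY : Y.Nonempty ∧ ∀ Z : Finset V, Z.Nonempty → Z ⊂ Y → f Z > f Y) :
    X ∩ Y = ∅ ∨ X ⊆ Y ∨ Y ⊆ X :=
  Finset.IsPosimodular.isExtreme_laminar hpos hX hY

theorem stmt_1 (V : Type*) [Fintype V] [DecidableEq V] (f : Finset V → ℝ)
    (hpos : ∀ X Y : Finset V, f X + f Y ≥ f (X \ Y) + f (Y \ X))
    (X Y : Finset V)
    (hX : X.Nonempty ∧ ∀ Z : Finset V, Z.Nonempty → Z ⊂ X → f Z > f X)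
    (hY : Y.Nonempty ∧ ∀ Z : Finset V, Z.Nonempty → Z ⊂ Y → f Z > f Y) :
    X ∩ Y = ∅ ∨ X ⊆ Y ∨ Y ⊆ X :=
  stmt_1_general V f hpos X Y hX hY
end

section
/- Let f : 2^V → ℝ be posimodular and let T ⊆ V attain the maximum of f over all subsets of V. If U is a nonempty proper subset of V with U ∩ T = ∅, then f(U) ≥ f({v}) for every v ∈ U. -/
theorem stmt_2 (V : Type*) [Fintype V] [DecidableEq V] (f : Finset V → ℝ)
    (hpos : ∀ X Y : Finset V, f X + f Y ≥ f (X \ Y) + f (Y \ X))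
    (hempty : f ∅ = 0)
    (T : Finset V) (hT : ∀ X : Finset V, f X ≤ f T)
    (U : Finset V) (hUne : U.Nonempty) (hUproper : U ⊂ Finset.univ)
    (hdisj : U ∩ T = ∅) :
    ∀ v ∈ U, f U ≥ f {v} := by
  intro v hv
  have key := hpos U (T ∪ (U \ {v}))
  have hdisj' : ∀ x, x ∈ U → x ∉ T := by
    intro x hx hxT
    have : x ∈ U ∩ T := Finset.mem_inter.2 ⟨hx, hxT⟩
    simp [hdisj] at this
  have h1 : U \ (T ∪ (U \ {v})) = {v} := by
    ext x
    simp only [Finset.mem_sdiff, Finset.mem_union, Finset.mem_singleton, not_or,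
      not_and, not_not]
    constructor
    · rintro ⟨hxU, hxT, hx⟩
      by_contra hne
      exact hne (hx hxU)
    · intro h
      subst h
      exact ⟨hv, hdisj' x hv, fun _ => rfl⟩
  have h2 : (T ∪ (U \ {v})) \ U = T := by
    ext x
    simp only [Finset.mem_sdiff, Finset.mem_union, Finset.mem_singleton]
    constructor
    · rintro ⟨hx | ⟨hxU, _⟩, hxU'⟩
      · exact hx
      · exact absurd hxU hxU'
    · intro hxT
      exact ⟨Or.inl hxT, fun hxU => hdisj' x hxU hxT⟩
  rw [h1, h2] at key
  have := hT (T ∪ (U \ {v}))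
  linarith
end

section
/- The optimal value of the covering LP — minimize Σ_{T∈𝒯} z_T subject to Σ_{T∈𝒯, T⊆S} z_T ≥ 1 for each S ∈ 𝒮 and z_T ≥ 0 — equals C(n, k+1)/C(2k, k+1), where 𝒮 = {S ⊆ V : |S| = 2k} and 𝒯 = {T ⊆ V : k+1 ≤ |T| ≤ 2k}, and in particular the integer program obtained by requiring z_T ∈ {0,1} has optimal value at least C(n, k+1)/C(2k, k+1). -/
/-!
Double counting. If `z` is a fractional cover, summing the covering constraints over all
`2k`-sets `S` gives `C(n, 2k) ≤ ∑_T z_T · #{S ⊇ T, |S| = 2k}`, and a set `T` with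
`k + 1 ≤ |T| ≤ 2k` lies in `C(n - |T|, 2k - |T|) ≤ C(n - k - 1, k - 1)` such sets `S`.
Since `C(n, 2k) C(2k, k + 1) = C(n, k + 1) C(n - k - 1, k - 1)`, this is the claimed bound.
It is attained by the weight `1 / C(2k, k + 1)` on every `(k + 1)`-set: each `2k`-set
contains exactly `C(2k, k + 1)` of them.
-/

open Finset

theorem Nat.choose_le_choose_add_add (m r d : ℕ) : m.choose r ≤ (m + d).choose (r + d) := by
  induction d with
  | zero => rfl
  | succ d ih =>
    calc m.choose r ≤ (m + d).choose (r + d) := ih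
      _ ≤ (m + d + 1).choose (r + d + 1) := by
        rw [Nat.choose_succ_succ]; exact Nat.le_add_right _ _

theorem Nat.choose_sub_sub_le {n m s t : ℕ} (hst : s ≤ t) (htm : t ≤ m) (htn : t ≤ n) :
    (n - t).choose (m - t) ≤ (n - s).choose (m - s) := by
  have hn : n - s = (n - t) + (t - s) := by omega
  have hm : m - s = (m - t) + (t - s) := by omega
  rw [hn, hm]
  exact Nat.choose_le_choose_add_add _ _ _

theorem Finset.card_le_mul_sum_of_cover {R ι κ : Type*} [CommSemiring R] [PartialOrder R]
    [IsOrderedRing R] (r : κ → ι → Prop) [∀ T S, Decidable (r T S)] {𝒮 : Finset ι}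
    {𝒯 : Finset κ} {z : κ → R} {M : ℕ} (hz : ∀ T ∈ 𝒯, 0 ≤ z T)
    (hdeg : ∀ T ∈ 𝒯, #{S ∈ 𝒮 | r T S} ≤ M) (hcover : ∀ S ∈ 𝒮, 1 ≤ ∑ T ∈ 𝒯 with r T S, z T) :
    (#𝒮 : R) ≤ M * ∑ T ∈ 𝒯, z T := by
  calc (#𝒮 : R) = ∑ _S ∈ 𝒮, 1 := by simp
    _ ≤ ∑ S ∈ 𝒮, ∑ T ∈ 𝒯.bipartiteBelow r S, z T := sum_le_sum hcover
    _ = ∑ T ∈ 𝒯, ∑ _S ∈ 𝒮.bipartiteAbove r T, z T :=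
      (sum_sum_bipartiteAbove_eq_sum_sum_bipartiteBelow r (fun T _ => z T)).symm
    _ = ∑ T ∈ 𝒯, #{S ∈ 𝒮 | r T S} * z T := by simp [bipartiteAbove, nsmul_eq_mul]
    _ ≤ ∑ T ∈ 𝒯, M * z T :=
      sum_le_sum fun T hT => mul_le_mul_of_nonneg_right (Nat.mono_cast (hdeg T hT)) (hz T hT)
    _ = M * ∑ T ∈ 𝒯, z T := (mul_sum ..).symm

theorem Finset.sum_ite_card_eq_choose_mul {α R : Type*} [Fintype α] [DecidableEq α]
    [Semiring R] {p : Finset α → Prop} [DecidablePred p] {S : Finset α} {m : ℕ}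
    (hp : ∀ T : Finset α, #T = m → (p T ↔ T ⊆ S)) (c : R) :
    ∑ T ∈ univ.filter p, (if #T = m then c else 0) = (#S).choose m * c := by
  have hfilter : {T ∈ univ.filter p | #T = m} = S.powersetCard m := by
    ext T
    simp only [mem_filter, mem_univ, true_and, mem_powersetCard]
    exact ⟨fun ⟨hpT, hT⟩ => ⟨(hp T hT).1 hpT, hT⟩, fun ⟨hTS, hT⟩ => ⟨(hp T hT).2 hTS, hT⟩⟩
  rw [← sum_filter, hfilter, sum_const, card_powersetCard, nsmul_eq_mul]

theorem choose_div_choose_le_sum_of_cover {V : Type*} [Fintype V] [DecidableEq V] {k : ℕ}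
    (hk : 0 < k) (hkn : 2 * k ≤ Fintype.card V)
    {z : Finset V → ℝ} (hz : ∀ T, 0 ≤ z T)
    (hcover : ∀ S : Finset V, #S = 2 * k →
      1 ≤ ∑ T ∈ univ.filter (fun T : Finset V => k + 1 ≤ #T ∧ #T ≤ 2 * k ∧ T ⊆ S), z T) :
    ((Fintype.card V).choose (k + 1) : ℝ) / ((2 * k).choose (k + 1) : ℝ) ≤
      ∑ T ∈ univ.filter (fun T : Finset V => k + 1 ≤ #T ∧ #T ≤ 2 * k), z T := by
  set n := Fintype.card V
  set M := (n - (k + 1)).choose (2 * k - (k + 1))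
  have hkk : k + 1 ≤ 2 * k := by omega
  have hdeg : ∀ T ∈ univ.filter (fun T : Finset V => k + 1 ≤ #T ∧ #T ≤ 2 * k),
      #{S ∈ powersetCard (2 * k) univ | T ⊆ S} ≤ M := by
    intro T hT
    obtain ⟨hT₁, hT₂⟩ := (mem_filter.1 hT).2
    rw [card_filter_powersetCard_subset T univ _ (subset_univ T) hT₂, card_univ]
    exact Nat.choose_sub_sub_le hT₁ hT₂ (hT₂.trans hkn)
  have hdouble : (n.choose (2 * k) : ℝ) ≤
      M * ∑ T ∈ univ.filter (fun T : Finset V => k + 1 ≤ #T ∧ #T ≤ 2 * k), z T := by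
    have := card_le_mul_sum_of_cover (· ⊆ ·) (fun T _ => hz T) hdeg fun S hS => by
      rw [filter_filter]
      simpa only [and_assoc] using hcover S (mem_powersetCard.1 hS).2
    rwa [card_powersetCard, card_univ] at this
  have hM : (0 : ℝ) < M := by exact_mod_cast Nat.choose_pos (by omega)
  have hC : (0 : ℝ) < (2 * k).choose (k + 1) := by exact_mod_cast Nat.choose_pos hkk
  have hid : (n.choose (2 * k) : ℝ) * (2 * k).choose (k + 1) = n.choose (k + 1) * M := by
    exact_mod_cast Nat.choose_mul hkk
  rw [div_le_iff₀ hC]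
  refine le_of_mul_le_mul_right ?_ hM
  calc (n.choose (k + 1) : ℝ) * M = n.choose (2 * k) * (2 * k).choose (k + 1) := hid.symm
    _ ≤ M * (∑ T ∈ univ.filter (fun T : Finset V => k + 1 ≤ #T ∧ #T ≤ 2 * k), z T) *
        (2 * k).choose (k + 1) := mul_le_mul_of_nonneg_right hdouble hC.le
    _ = _ := by ring

theorem stmt_5 (V : Type*) [Fintype V] [DecidableEq V] (k : ℕ) (hk : 0 < k)
    (hkn : 2 * k ≤ Fintype.card V) :
    (IsLeast
      { val : ℝ | ∃ z : Finset V → ℝ,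
          (∀ T : Finset V, 0 ≤ z T) ∧
          (∀ S : Finset V, S.card = 2 * k →
            1 ≤ ∑ T ∈ Finset.univ.filter
                  (fun T : Finset V => k + 1 ≤ T.card ∧ T.card ≤ 2 * k ∧ T ⊆ S), z T) ∧
          val = ∑ T ∈ Finset.univ.filter
                  (fun T : Finset V => k + 1 ≤ T.card ∧ T.card ≤ 2 * k), z T }
      (((Fintype.card V).choose (k + 1) : ℝ) / ((2 * k).choose (k + 1) : ℝ))) ∧
    (∀ z : Finset V → ℝ, (∀ T : Finset V, z T = 0 ∨ z T = 1) →
      (∀ S : Finset V, S.card = 2 * k →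
        1 ≤ ∑ T ∈ Finset.univ.filter
              (fun T : Finset V => k + 1 ≤ T.card ∧ T.card ≤ 2 * k ∧ T ⊆ S), z T) →
      ((Fintype.card V).choose (k + 1) : ℝ) / ((2 * k).choose (k + 1) : ℝ) ≤
        ∑ T ∈ Finset.univ.filter
              (fun T : Finset V => k + 1 ≤ T.card ∧ T.card ≤ 2 * k), z T) := by
  have hC : ((2 * k).choose (k + 1) : ℝ) ≠ 0 := by
    exact_mod_cast (Nat.choose_pos (by omega : k + 1 ≤ 2 * k)).ne'
  set c := ((2 * k).choose (k + 1) : ℝ)⁻¹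
  have hband : ∀ T : Finset V, #T = k + 1 → (k + 1 ≤ #T ∧ #T ≤ 2 * k ↔ T ⊆ univ) := by
    intro T hT; simp only [subset_univ, iff_true]; omega
  refine ⟨⟨⟨fun T => if #T = k + 1 then c else 0, fun T => by positivity, fun S hS => ?_, ?_⟩,
    fun _ ⟨z, hz, hcover, hval⟩ => hval ▸ choose_div_choose_le_sum_of_cover hk hkn hz hcover⟩,
    fun z hz01 => choose_div_choose_le_sum_of_cover hk hkn fun T => by
      rcases hz01 T with h | h <;> simp [h]⟩
  · have hsub : ∀ T : Finset V, #T = k + 1 → (k + 1 ≤ #T ∧ #T ≤ 2 * k ∧ T ⊆ S ↔ T ⊆ S) := by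
      intro T hT; constructor
      · exact fun h => h.2.2
      · exact fun h => ⟨hT.ge, by omega, h⟩
    rw [sum_ite_card_eq_choose_mul hsub, hS, mul_inv_cancel₀ hC]
  · rw [sum_ite_card_eq_choose_mul hband, card_univ, div_eq_mul_inv]
end

section
/- Let f : 2^V → ℝ be posimodular and X a semi-extreme set of f. If f attains its minimum over nonempty subsets at some set, then there exists a minimizer Y of f over nonempty subsets such that either X ⊆ Y or X ∩ Y = ∅. -/
theorem stmt_6 (V : Type*) [Fintype V] [DecidableEq V] (f : Finset V → ℝ)
    (hpos : ∀ X Y : Finset V, f X + f Y ≥ f (X \ Y) + f (Y \ X))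
    (X : Finset V) (hXne : X.Nonempty)
    (hsemi : ∀ Y : Finset V, Y.Nonempty → Y ⊆ X → f Y ≥ f X)
    (hmin : ∃ Y : Finset V, Y.Nonempty ∧ ∀ Z : Finset V, Z.Nonempty → f Y ≤ f Z) :
    ∃ Y : Finset V, Y.Nonempty ∧ (∀ Z : Finset V, Z.Nonempty → f Y ≤ f Z) ∧
      (X ⊆ Y ∨ X ∩ Y = ∅) := by
  obtain ⟨Y, hYne, hY⟩ := hmin
  by_cases hsub : X ⊆ Y
  · exact ⟨Y, hYne, hY, Or.inl hsub⟩
  have hXYne : (X \ Y).Nonempty := by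
    rw [Finset.sdiff_nonempty]; exact hsub
  by_cases hYX : (Y \ X).Nonempty
  · refine ⟨Y \ X, hYX, ?_, Or.inr ?_⟩
    · intro Z hZ
      have h1 := hpos X Y
      have h2 := hsemi (X \ Y) hXYne (Finset.sdiff_subset)
      have h3 : f Y ≥ f (Y \ X) := by linarith
      exact le_trans h3 (hY Z hZ)
    · simp [Finset.inter_sdiff_self]
  · have hYsub : Y ⊆ X := by
      rw [Finset.not_nonempty_iff_eq_empty, Finset.sdiff_eq_empty_iff_subset] at hYX
      exact hYX
    refine ⟨X, hXne, ?_, Or.inl (Finset.Subset.refl X)⟩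
    intro Z hZ
    have := hsemi Y hYne hYsub
    have := hY Z hZ
    linarith
end

section
/- Let f : 2^V → {0,1,2,3} be posimodular with f(∅) = 0. Then either there exists a semi-extreme set X with |X| = 2, or there is a minimizer Y of f over nonempty subsets with |Y| = 1 or |Y| ≥ |V| − 1. -/
theorem stmt_7 (V : Type*) [Fintype V] [DecidableEq V] [Nonempty V]
    (f : Finset V → ℕ)
    (hpos : ∀ X Y : Finset V, f X + f Y ≥ f (X \ Y) + f (Y \ X))
    (hrange : ∀ X : Finset V, f X ≤ 3) (hempty : f ∅ = 0) :
    (∃ X : Finset V, X.card = 2 ∧ X.Nonempty ∧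
        ∀ Y : Finset V, Y.Nonempty → Y ⊆ X → f Y ≥ f X) ∨
    (∃ Y : Finset V, Y.Nonempty ∧ (∀ Z : Finset V, Z.Nonempty → f Y ≤ f Z) ∧
        (Y.card = 1 ∨ Y.card ≥ Fintype.card V - 1)) := by
  by_contra hcon
  push_neg at hcon
  obtain ⟨hL, hR⟩ := hcon
  -- obtain a minimizer Y₀ of f over nonempty sets
  obtain ⟨Y₀, hY₀mem, hY₀min⟩ := Finset.exists_min_image
    ((Finset.univ : Finset (Finset V)).filter (fun s => s.Nonempty)) f
    ⟨{Classical.arbitrary V}, by simp⟩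
  simp only [Finset.mem_filter, Finset.mem_univ, true_and] at hY₀mem
  have hmin : ∀ Z : Finset V, Z.Nonempty → f Y₀ ≤ f Z := by
    intro Z hZ
    exact hY₀min Z (by simp [hZ])
  have hcards := hR Y₀ hY₀mem hmin
  -- every singleton has value ≥ f Y₀ + 1
  have hsing : ∀ v : V, f Y₀ + 1 ≤ f {v} := by
    intro v
    have h1 := hmin {v} (Finset.singleton_nonempty v)
    rcases eq_or_lt_of_le h1 with he | hlt
    · exfalso
      have h2 := hR {v} (Finset.singleton_nonempty v)
        (fun Z hZ => by rw [← he]; exact hmin Z hZ)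
      exact h2.1 (Finset.card_singleton v)
    · omega
  -- every pair has value ≥ f Y₀ + 2
  have hpairb : ∀ a b : V, a ≠ b → f Y₀ + 2 ≤ f {a, b} := by
    intro a b hab
    obtain ⟨Z, hZne, hZsub, hZlt⟩ := hL {a, b} (Finset.card_pair hab) ⟨a, by simp⟩
    have h1 := hmin Z hZne
    rcases eq_or_lt_of_le h1 with he | hlt
    · exfalso
      have h2 := hR Z hZne (fun W hW => by rw [← he]; exact hmin W hW)
      have hc1 : Z.card ≤ 2 := by
        have := Finset.card_le_card hZsub
        rwa [Finset.card_pair hab] at this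
      have hc0 : 1 ≤ Z.card := Finset.one_le_card.mpr hZne
      have hZeq : Z = {a, b} := Finset.eq_of_subset_of_card_le hZsub
        (by rw [Finset.card_pair hab]; omega)
      rw [hZeq] at hZlt
      exact lt_irrefl _ hZlt
    · omega
  -- Y₀ has at least 2 elements
  have hY1 : 1 ≤ Y₀.card := Finset.one_le_card.mpr hY₀mem
  obtain ⟨u1, hu1, u2, hu2, hne_u⟩ := Finset.one_lt_card.mp (by omega : 1 < Y₀.card)
  -- complement of Y₀ has at least 2 elements
  have hYle : Y₀.card ≤ Fintype.card V := Y₀.card_le_univ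
  have hcompl : 1 < (Finset.univ \ Y₀).card := by
    rw [Finset.card_sdiff_of_subset (Finset.subset_univ _), Finset.card_univ]
    omega
  obtain ⟨w1, hw1, w2, hw2, hne_w⟩ := Finset.one_lt_card.mp hcompl
  have hw1' : w1 ∉ Y₀ := (Finset.mem_sdiff.mp hw1).2
  have hw2' : w2 ∉ Y₀ := (Finset.mem_sdiff.mp hw2).2
  have hu1w1 : u1 ≠ w1 := fun h => hw1' (h ▸ hu1)
  have hu1w2 : u1 ≠ w2 := fun h => hw2' (h ▸ hu1)
  have hu2w1 : u2 ≠ w1 := fun h => hw1' (h ▸ hu2)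
  have hu2w2 : u2 ≠ w2 := fun h => hw2' (h ▸ hu2)
  set B := (Y₀ \ {u1, u2}) ∪ {w1, w2} with hB
  have hYB : Y₀ \ B = {u1, u2} := by
    ext x
    simp only [hB, Finset.mem_sdiff, Finset.mem_union, Finset.mem_insert,
      Finset.mem_singleton]
    constructor
    · rintro ⟨hxY, hx⟩
      by_contra hc
      exact hx (Or.inl ⟨hxY, hc⟩)
    · rintro (rfl | rfl)
      · refine ⟨hu1, ?_⟩
        rintro (⟨_, h⟩ | h | h)
        · exact h (Or.inl rfl)
        · exact hu1w1 h
        · exact hu1w2 h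
      · refine ⟨hu2, ?_⟩
        rintro (⟨_, h⟩ | h | h)
        · exact h (Or.inr rfl)
        · exact hu2w1 h
        · exact hu2w2 h
  have hBY : B \ Y₀ = {w1, w2} := by
    ext x
    simp only [hB, Finset.mem_sdiff, Finset.mem_union, Finset.mem_insert,
      Finset.mem_singleton]
    constructor
    · rintro ⟨hx, hxY⟩
      rcases hx with ⟨h, _⟩ | h
      · exact absurd h hxY
      · exact h
    · rintro (rfl | rfl)
      · exact ⟨Or.inr (Or.inl rfl), hw1'⟩
      · exact ⟨Or.inr (Or.inr rfl), hw2'⟩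
  have hp := hpos Y₀ B
  rw [hYB, hBY] at hp
  have h1 := hpairb u1 u2 hne_u
  have h2 := hpairb w1 w2 hne_w
  have h3 := hrange B
  omega
end

section
/- Let f : 2^V → {0,1,…,d} with f(∅) = 0. Then every minimal unreachable set U of f satisfies 1 ≤ |U| ≤ d+1, and every set I ⊆ V containing no minimal unreachable set satisfies |I| ≤ d. Moreover, if a singleton {u} is a minimal unreachable set, then f({u}) = 0. -/
/-- `X` is reachable from `∅`: there is a chain `∅ = X_0 ⊊ X_1 ⊊ ⋯ ⊊ X_k = X`
(`k = |X|`, so each step adds exactly one element) with strictly increasing `f`-values. -/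
def Reachable {V : Type*} [DecidableEq V] (f : Finset V → ℕ) (X : Finset V) : Prop :=
  ∃ c : ℕ → Finset V, c 0 = ∅ ∧ c X.card = X ∧
    ∀ i < X.card, c i ⊂ c (i + 1) ∧ f (c i) < f (c (i + 1))

/-- `U` is a minimal unreachable set. -/
def MinUnreachable {V : Type*} [DecidableEq V] (f : Finset V → ℕ) (U : Finset V) : Prop :=
  ¬ Reachable f U ∧ ∀ W : Finset V, W ⊂ U → Reachable f W

/-! Along a witnessing chain `f` increases by at least one per step, so a reachable set `X`
has `|X| ≤ f X ≤ d`. Hence every set of size `d + 1` is unreachable, which bounds minimal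
unreachable sets, and a set containing no minimal unreachable set is reachable, which bounds
independent sets. A singleton with `f {u} > 0 = f ∅` is reachable in one step. -/

section

variable {V : Type*} [DecidableEq V] {f : Finset V → ℕ}

theorem Reachable.card_le {X : Finset V} (hX : Reachable f X) : X.card ≤ f X := by
  obtain ⟨c, -, hcX, hstep⟩ := hX
  have hchain : ∀ i ≤ X.card, i ≤ f (c i) := by
    intro i hi
    induction i with
    | zero => exact Nat.zero_le _
    | succ n ih =>
      have hlt := (hstep n hi).2
      have hle := ih (Nat.le_of_succ_le hi)
      omega
  simpa [hcX] using hchain X.card le_rfl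

theorem reachable_empty (f : Finset V → ℕ) : Reachable f ∅ :=
  ⟨fun _ => ∅, rfl, rfl, by simp⟩

theorem reachable_singleton {u : V} (h : f ∅ < f {u}) : Reachable f {u} := by
  refine ⟨fun i => if i = 0 then ∅ else {u}, rfl, rfl, ?_⟩
  intro i hi
  obtain rfl : i = 0 := by simpa using hi
  simpa using h

theorem exists_minUnreachable_subset {U : Finset V} (hU : ¬ Reachable f U) :
    ∃ W ⊆ U, MinUnreachable f W := by
  obtain ⟨W, ⟨hWU, hW⟩, hmin⟩ :=
    wellFounded_lt.has_min {W : Finset V | W ⊆ U ∧ ¬ Reachable f W} ⟨U, subset_rfl, hU⟩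
  exact ⟨W, hWU, hW, fun W' hW' => by_contra fun h => hmin W' ⟨hW'.subset.trans hWU, h⟩ hW'⟩

theorem MinUnreachable.nonempty {U : Finset V} (hU : MinUnreachable f U) : U.Nonempty :=
  Finset.nonempty_iff_ne_empty.mpr fun h => hU.1 (h ▸ reachable_empty f)

theorem MinUnreachable.card_le {d : ℕ} (hrange : ∀ X, f X ≤ d) {U : Finset V}
    (hU : MinUnreachable f U) : U.card ≤ d + 1 := by
  obtain ⟨a, ha⟩ := hU.nonempty
  have herase := (hU.2 _ (Finset.erase_ssubset ha)).card_le
  have hcard := Finset.card_erase_add_one ha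
  have := hrange (U.erase a)
  omega

end

theorem stmt_10_general (V : Type*) [DecidableEq V] (d : ℕ) (f : Finset V → ℕ)
    (hrange : ∀ X : Finset V, f X ≤ d) (hempty : f ∅ = 0) :
    (∀ U : Finset V, MinUnreachable f U → 1 ≤ U.card ∧ U.card ≤ d + 1) ∧
    (∀ I : Finset V, (∀ U : Finset V, MinUnreachable f U → ¬ U ⊆ I) → I.card ≤ d) ∧
    (∀ u : V, MinUnreachable f {u} → f {u} = 0) := by
  refine ⟨fun U hU => ⟨hU.nonempty.card_pos, hU.card_le hrange⟩, fun I hI => ?_, fun u hu => ?_⟩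
  · have hI : Reachable f I := by
      by_contra h
      obtain ⟨W, hWI, hW⟩ := exists_minUnreachable_subset h
      exact hI W hW hWI
    exact hI.card_le.trans (hrange I)
  · by_contra h
    exact hu.1 (reachable_singleton (by omega))

theorem stmt_10 (V : Type*) [Fintype V] [DecidableEq V] (d : ℕ) (f : Finset V → ℕ)
    (hrange : ∀ X : Finset V, f X ≤ d) (hempty : f ∅ = 0) :
    (∀ U : Finset V, MinUnreachable f U → 1 ≤ U.card ∧ U.card ≤ d + 1) ∧
    (∀ I : Finset V, (∀ U : Finset V, MinUnreachable f U → ¬ U ⊆ I) → I.card ≤ d) ∧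
    (∀ u : V, MinUnreachable f {u} → f {u} = 0) :=
  stmt_10_general V d f hrange hempty
end

section
/- Let f : 2^V → {0,1,…,d} be posimodular with f(∅) = 0, and let X* be a locally minimal set (f(X*) < f(X* \ {v}) for every v ∈ X*). Then for every minimal unreachable set U of f and every s ∈ U, if X* ∩ (U \ {s}) = ∅ then s ∉ X*. -/
theorem stmt_11 (V : Type*) [Fintype V] [DecidableEq V] (d : ℕ) (f : Finset V → ℕ)
    (hpos : ∀ X Y : Finset V, f X + f Y ≥ f (X \ Y) + f (Y \ X))
    (hrange : ∀ X : Finset V, f X ≤ d) (hempty : f ∅ = 0)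
    (Xstar : Finset V) (hloc : ∀ v ∈ Xstar, f Xstar < f (Xstar.erase v)) :
    ∀ U : Finset V, MinUnreachable f U → ∀ s ∈ U,
      Xstar ∩ U.erase s = ∅ → s ∉ Xstar := by
  intro U hU s hsU hint hs
  have h0 : ∀ x, x ∈ Xstar → x ∈ U → x = s := by
    intro x hx hxu
    by_contra hne
    have hx' : x ∈ Xstar ∩ U.erase s := by
      simp [Finset.mem_inter, Finset.mem_erase, hne, hx, hxu]
    rw [hint] at hx'
    exact absurd hx' (Finset.notMem_empty x)
  have hXU : Xstar \ U = Xstar.erase s := by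
    ext x
    simp only [Finset.mem_sdiff, Finset.mem_erase]
    constructor
    · rintro ⟨hx, hxu⟩
      exact ⟨fun h => hxu (h ▸ hsU), hx⟩
    · rintro ⟨hne, hx⟩
      exact ⟨hx, fun h => hne (h0 x hx h)⟩
  have hUX : U \ Xstar = U.erase s := by
    ext x
    simp only [Finset.mem_sdiff, Finset.mem_erase]
    constructor
    · rintro ⟨hx, hxs⟩
      exact ⟨fun h => hxs (h ▸ hs), hx⟩
    · rintro ⟨hne, hx⟩
      exact ⟨hx, fun h => hne (h0 x h hx)⟩
  have hp := hpos U Xstar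
  rw [hXU, hUX] at hp
  have hl := hloc s hs
  have key : f (U.erase s) < f U := by omega
  -- build reachability of U from reachability of U.erase s
  have hss : U.erase s ⊂ U := Finset.erase_ssubset hsU
  obtain ⟨c, hc0, hcend, hcstep⟩ := hU.2 (U.erase s) hss
  have hcard : (U.erase s).card = U.card - 1 := Finset.card_erase_of_mem hsU
  have hpos1 : 1 ≤ U.card := Finset.card_pos.mpr ⟨s, hsU⟩
  apply hU.1
  refine ⟨fun i => if i = U.card then U else c i, ?_, ?_, ?_⟩
  · simp only [if_neg (by omega : (0:ℕ) ≠ U.card)]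
    exact hc0
  · simp
  · intro i hi
    have hine : i ≠ U.card := by omega
    simp only [if_neg hine]
    by_cases h1 : i + 1 = U.card
    · have : c i = U.erase s := by
        rw [← hcend]; congr 1; omega
      rw [if_pos h1, this]
      exact ⟨hss, key⟩
    · rw [if_neg h1]
      exact hcstep i (by omega)
end

section
/- Let V be a finite set with |V| = n = 2k for a positive integer k, and define g(X) = min(|X|, k). For S ⊆ V with |S| ≥ k, define g_S(X) = g(X) for X ≠ S and g_S(S) = k+1. Then g_S is posimodular. -/
theorem stmt_12 (V : Type*) [Fintype V] [DecidableEq V] (k : ℕ) (hk : 0 < k)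
    (hn : Fintype.card V = 2 * k)
    (S : Finset V) (hS : k ≤ S.card)
    (gS : Finset V → ℝ)
    (hgS : ∀ X : Finset V,
      gS X = if X = S then (k : ℝ) + 1 else min (X.card : ℝ) (k : ℝ)) :
    ∀ X Y : Finset V, gS X + gS Y ≥ gS (X \ Y) + gS (Y \ X) := by
  have hSne : S.Nonempty := Finset.card_pos.mp (lt_of_lt_of_le hk hS)
  -- gS is at least min(card, k)
  have hlow : ∀ Z : Finset V, min (Z.card : ℝ) (k : ℝ) ≤ gS Z := by
    intro Z
    rw [hgS Z]
    split_ifs with h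
    · subst h
      have : min (Z.card : ℝ) (k : ℝ) ≤ (k : ℝ) := min_le_right _ _
      linarith
    · exact le_rfl
  -- key lemma: the case X \ Y = S
  have key : ∀ X Y : Finset V, X \ Y = S →
      gS X + gS Y ≥ gS (X \ Y) + gS (Y \ X) := by
    intro X Y hXY
    by_cases hXS : X = S
    · subst hXS
      have hdisj : Disjoint X Y := Finset.sdiff_eq_self_iff_disjoint.mp hXY
      have hYX : Y \ X = Y := Finset.sdiff_eq_self_iff_disjoint.mpr hdisj.symm
      rw [hXY, hYX]
    · have hSX : S ⊆ X := hXY ▸ Finset.sdiff_subset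
      have hssub : S ⊂ X := ssubset_of_subset_of_ne hSX (fun h => hXS h.symm)
      have hcardX : k + 1 ≤ X.card := by
        have := Finset.card_lt_card hssub
        omega
      have hcompl : Y \ X ⊆ Finset.univ \ X := by
        intro x hx
        simp only [Finset.mem_sdiff, Finset.mem_univ, true_and] at *
        exact hx.2
      have hYXcard : (Y \ X).card < k := by
        have h1 := Finset.card_le_card hcompl
        rw [Finset.card_sdiff_of_subset (Finset.subset_univ X), Finset.card_univ, hn] at h1
        omega
      have hYXne : Y \ X ≠ S := by
        intro h
        rw [h] at hYXcard
        omega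
      -- there is an element of X ∩ Y
      obtain ⟨x, hxX, hxS⟩ := Finset.exists_of_ssubset hssub
      have hxY : x ∈ Y := by
        by_contra hxY
        exact hxS (hXY ▸ Finset.mem_sdiff.mpr ⟨hxX, hxY⟩)
      have hgX : gS X = (k : ℝ) := by
        rw [hgS X, if_neg hXS, min_eq_right]
        exact_mod_cast (by omega : k ≤ X.card)
      have hgXY : gS (X \ Y) = (k : ℝ) + 1 := by rw [hgS, if_pos hXY]
      have hgYX : gS (Y \ X) = ((Y \ X).card : ℝ) := by
        rw [hgS, if_neg hYXne, min_eq_left]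
        exact_mod_cast Nat.le_of_lt hYXcard
      by_cases hYS : Y = S
      · have hempty : Y \ X = ∅ := by
          rw [hYS]
          exact Finset.sdiff_eq_empty_iff_subset.mpr hSX
        rw [hgX, hgXY, hgYX, hempty, hgS Y, if_pos hYS]
        simp
      · have hgY : gS Y = min (Y.card : ℝ) (k : ℝ) := by rw [hgS, if_neg hYS]
        have hYcard : (Y \ X).card + 1 ≤ Y.card := by
          have : (Y \ X) ⊂ Y := by
            refine Finset.ssubset_iff_of_subset Finset.sdiff_subset |>.mpr ?_
            exact ⟨x, hxY, fun h => (Finset.mem_sdiff.mp h).2 hxX⟩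
          have := Finset.card_lt_card this
          omega
        have hminY : ((Y \ X).card : ℝ) + 1 ≤ min (Y.card : ℝ) (k : ℝ) := by
          refine le_min ?_ ?_
          · exact_mod_cast hYcard
          · exact_mod_cast hYXcard
        rw [hgX, hgXY, hgYX, hgY]
        linarith
  intro X Y
  by_cases h1 : X \ Y = S
  · exact key X Y h1
  by_cases h2 : Y \ X = S
  · have := key Y X h2
    linarith
  · have hX := hlow X
    have hY := hlow Y
    rw [hgS (X \ Y), if_neg h1, hgS (Y \ X), if_neg h2]
    have m1 : min ((X \ Y).card : ℝ) (k : ℝ) ≤ min (X.card : ℝ) (k : ℝ) := by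
      apply min_le_min _ le_rfl
      exact_mod_cast Finset.card_le_card Finset.sdiff_subset
    have m2 : min ((Y \ X).card : ℝ) (k : ℝ) ≤ min (Y.card : ℝ) (k : ℝ) := by
      apply min_le_min _ le_rfl
      exact_mod_cast Finset.card_le_card Finset.sdiff_subset
    linarith
end

section
/- Let f : 2^V → {0,1,…,d} be posimodular, and let S be a maximal maximizer of f over nonempty subsets (no proper superset of S attains the maximum). Then for any set X ⊆ V and element v ∈ V such that X, {v}, S are pairwise disjoint, f(X ∪ {v}) ≥ f(X) + 1. -/
theorem stmt_13 (V : Type*) [Fintype V] [DecidableEq V] (d : ℕ) (f : Finset V → ℕ)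
    (hpos : ∀ X Y : Finset V, f X + f Y ≥ f (X \ Y) + f (Y \ X))
    (hrange : ∀ X : Finset V, f X ≤ d)
    (S : Finset V) (hSne : S.Nonempty)
    (hSmax : ∀ X : Finset V, X.Nonempty → f X ≤ f S)
    (hSmaximal : ∀ X : Finset V, S ⊂ X → f X < f S) :
    ∀ (X : Finset V) (v : V), Disjoint X S → v ∉ X → v ∉ S →
      f (insert v X) ≥ f X + 1 := by
  intro X v hXS hvX hvS
  have h1 : f (insert v S) < f S := hSmaximal _ (Finset.ssubset_insert hvS)
  have h2 := hpos (insert v X) (insert v S)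
  have e1 : insert v X \ insert v S = X := by
    ext x
    simp only [Finset.mem_sdiff, Finset.mem_insert]
    constructor
    · rintro ⟨h | h, hn⟩
      · exact absurd (Or.inl h) hn
      · exact h
    · intro hx
      refine ⟨Or.inr hx, ?_⟩
      rintro (rfl | hs)
      · exact hvX hx
      · exact Finset.disjoint_left.mp hXS hx hs
  have e2 : insert v S \ insert v X = S := by
    ext x
    simp only [Finset.mem_sdiff, Finset.mem_insert]
    constructor
    · rintro ⟨h | h, hn⟩
      · exact absurd (Or.inl h) hn
      · exact h
    · intro hx
      refine ⟨Or.inr hx, ?_⟩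
      rintro (rfl | hs)
      · exact hvS hx
      · exact Finset.disjoint_left.mp hXS hs hx
  rw [e1, e2] at h2
  omega
end

section
/- Let f : 2^V → {0,1,…,d} be posimodular with f(∅) = 0. Then every maximal maximizer S of f over nonempty subsets satisfies |S| ≥ |V| − d. -/
theorem stmt_14 (V : Type*) [Fintype V] [DecidableEq V] (d : ℕ) (f : Finset V → ℕ)
    (hpos : ∀ X Y : Finset V, f X + f Y ≥ f (X \ Y) + f (Y \ X))
    (hrange : ∀ X : Finset V, f X ≤ d) (hempty : f ∅ = 0)
    (S : Finset V) (hSne : S.Nonempty)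
    (hSmax : ∀ X : Finset V, X.Nonempty → f X ≤ f S)
    (hSmaximal : ∀ X : Finset V, S ⊂ X → f X < f S) :
    S.card ≥ Fintype.card V - d := by
  have key : ∀ n (A : Finset V), A.card = n → Disjoint A S → A.card ≤ f A := by
    intro n
    induction n with
    | zero => intro A hA _; simp [hA]
    | succ n ih =>
      intro A hA hdisj
      obtain ⟨v, hv⟩ : A.Nonempty := Finset.card_pos.mp (by omega)
      have hvS : v ∉ S := fun h => Finset.disjoint_left.mp hdisj hv h
      have hsub : S ⊂ S ∪ {v} := by
        refine Finset.ssubset_iff_of_subset Finset.subset_union_left |>.mpr ⟨v, by simp, hvS⟩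
      have h1 : f (S ∪ {v}) < f S := hSmaximal _ hsub
      have h2 := hpos A (S ∪ {v})
      have hXY : A \ (S ∪ {v}) = A \ {v} := by
        ext x
        simp only [Finset.mem_sdiff, Finset.mem_union, Finset.mem_singleton]
        constructor
        · rintro ⟨hx, hn⟩; exact ⟨hx, fun h => hn (Or.inr h)⟩
        · rintro ⟨hx, hn⟩
          exact ⟨hx, fun h => h.elim (fun hs => Finset.disjoint_left.mp hdisj hx hs) hn⟩
      have hYX : (S ∪ {v}) \ A = S := by
        ext x
        simp only [Finset.mem_sdiff, Finset.mem_union, Finset.mem_singleton]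
        constructor
        · rintro ⟨h, hn⟩
          rcases h with h | h
          · exact h
          · exact absurd (h ▸ hv) hn
        · intro hx; exact ⟨Or.inl hx, fun h => Finset.disjoint_left.mp hdisj h hx⟩
      rw [hXY, hYX] at h2
      have hcard : (A \ {v}).card = n := by
        rw [Finset.sdiff_singleton_eq_erase, Finset.card_erase_of_mem hv, hA]
        rfl
      have h3 := ih (A \ {v}) hcard (Finset.disjoint_of_subset_left (Finset.sdiff_subset) hdisj)
      omega
  by_cases hcompl : Sᶜ = (∅ : Finset V)
  · have : S = Finset.univ := by
      rwa [Finset.compl_eq_empty_iff] at hcompl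
    simp [this, Finset.card_univ]
  · have hdisj : Disjoint Sᶜ S := disjoint_compl_left
    have h1 := key Sᶜ.card Sᶜ rfl hdisj
    have h2 := hrange Sᶜ
    have h3 : Sᶜ.card = Fintype.card V - S.card := by
      rw [Finset.card_compl]
    have h4 : S.card ≤ Fintype.card V := Finset.card_le_card (Finset.subset_univ S) |>.trans_eq (Finset.card_univ)
    omega
end

section
/- Let f : 2^V → {0,1,…,d} be posimodular with f(∅)=0, n = |V|, and suppose every maximal maximizer of f has size n − d and value d. Let S be a maximizer of f with |S| = d, and let X ⊆ V with |X| = d−1, f(X) = d−1, and X ∩ S = ∅. Then there exists v ∈ V \ (S ∪ X) with f(X ∪ {v}) = d. -/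
theorem stmt_17 (V : Type*) [Fintype V] [DecidableEq V] (d : ℕ) (f : Finset V → ℕ)
    (hpos : ∀ X Y : Finset V, f X + f Y ≥ f (X \ Y) + f (Y \ X))
    (hrange : ∀ X : Finset V, f X ≤ d) (hempty : f ∅ = 0)
    (hn : 2 * d ≤ Fintype.card V)
    (hmaxmax : ∀ Xs : Finset V, Xs.Nonempty →
      (∀ X : Finset V, X.Nonempty → f X ≤ f Xs) →
      (∀ X : Finset V, Xs ⊂ X → f X < f Xs) →
      Xs.card = Fintype.card V - d ∧ f Xs = d)
    (S : Finset V) (hSne : S.Nonempty)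
    (hSmax : ∀ X : Finset V, X.Nonempty → f X ≤ f S) (hScard : S.card = d)
    (X : Finset V) (hXcard : X.card = d - 1) (hXval : f X = d - 1)
    (hXS : X ∩ S = ∅) :
    ∃ v ∈ Finset.univ \ (S ∪ X), f (insert v X) = d := by
  classical
  -- d ≥ 1
  have hd1 : 1 ≤ d := by
    by_contra h
    have hd0 : d = 0 := by omega
    have : S = ∅ := Finset.card_eq_zero.mp (by rw [hScard, hd0])
    exact hSne.ne_empty this
  -- key: any maximizer extends to a maximal maximizer of size n - d
  have key : ∀ B : Finset V, B.Nonempty → f B = f S →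
      ∃ T : Finset V, B ⊆ T ∧ T.card = Fintype.card V - d ∧ f T = d := by
    intro B hBne hBf
    obtain ⟨T, hTmem, hTmax⟩ :=
      Finset.exists_max_image (Finset.univ.filter (fun W => B ⊆ W ∧ f W = f S))
        Finset.card ⟨B, by simp [hBf]⟩
    simp only [Finset.mem_filter, Finset.mem_univ, true_and] at hTmem
    obtain ⟨hBT, hfT⟩ := hTmem
    have hTne : T.Nonempty := hBne.mono hBT
    have hstrict : ∀ W : Finset V, T ⊂ W → f W < f T := by
      intro W hW
      have hWne : W.Nonempty := hTne.mono hW.subset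
      have hle : f W ≤ f T := by rw [hfT]; exact hSmax W hWne
      rcases lt_or_eq_of_le hle with h | h
      · exact h
      · exfalso
        have hWmem : W ∈ Finset.univ.filter (fun W => B ⊆ W ∧ f W = f S) := by
          simp only [Finset.mem_filter, Finset.mem_univ, true_and]
          exact ⟨hBT.trans hW.subset, h.symm ▸ hfT⟩
        have := hTmax W hWmem
        have := Finset.card_lt_card hW
        omega
    have h := hmaxmax T hTne (fun W hWne => by rw [hfT]; exact hSmax W hWne) hstrict
    exact ⟨T, hBT, h.1, h.2⟩
  -- f S = d
  have hfS : f S = d := by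
    obtain ⟨T, hST, hTcard, hTval⟩ := key S hSne rfl
    have hTne : T.Nonempty := hSne.mono hST
    have h1 : f T ≤ f S := hSmax T hTne
    have h2 : f S ≤ d := hrange S
    omega
  -- choose M of maximal cardinality among maximizers containing S, disjoint from X
  have hSX : S ∩ X = ∅ := by rw [Finset.inter_comm]; exact hXS
  obtain ⟨M, hMmem, hMmax⟩ :=
    Finset.exists_max_image
      (Finset.univ.filter (fun W => S ⊆ W ∧ W ∩ X = ∅ ∧ f W = d))
      Finset.card ⟨S, by simp [hSX, hfS]⟩
  simp only [Finset.mem_filter, Finset.mem_univ, true_and] at hMmem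
  obtain ⟨hSM, hMX, hMval⟩ := hMmem
  have hMne : M.Nonempty := hSne.mono hSM
  -- |M| ≤ n - d
  obtain ⟨T, hMT, hTcard, _⟩ := key M hMne (by rw [hMval, hfS])
  have hMcard : M.card ≤ Fintype.card V - d := hTcard ▸ Finset.card_le_card hMT
  -- find v outside M ∪ X
  have hdle : d ≤ Fintype.card V := by omega
  have hcardMX : (M ∪ X).card < Fintype.card V := by
    have := Finset.card_union_le M X
    omega
  obtain ⟨v, hv⟩ : ∃ v : V, v ∉ M ∪ X := by
    by_contra h
    push_neg at h
    have : M ∪ X = Finset.univ := Finset.eq_univ_of_forall h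
    rw [this, Finset.card_univ] at hcardMX
    omega
  have hvM : v ∉ M := fun h => hv (Finset.mem_union_left _ h)
  have hvX : v ∉ X := fun h => hv (Finset.mem_union_right _ h)
  have hvS : v ∉ S := fun h => hvM (hSM h)
  -- disjointness facts
  have hdisjMX : ∀ a : V, a ∈ M → a ∉ X := by
    intro a ha hax
    have : a ∈ M ∩ X := Finset.mem_inter.mpr ⟨ha, hax⟩
    rw [hMX] at this
    exact absurd this (Finset.notMem_empty a)
  -- f (insert v M) ≤ d - 1
  have hins : f (insert v M) ≤ d - 1 := by
    have hne : f (insert v M) ≠ d := by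
      intro h
      have hmem : insert v M ∈
          Finset.univ.filter (fun W => S ⊆ W ∧ W ∩ X = ∅ ∧ f W = d) := by
        simp only [Finset.mem_filter, Finset.mem_univ, true_and]
        refine ⟨hSM.trans (Finset.subset_insert _ _), ?_, h⟩
        ext a
        simp only [Finset.mem_inter, Finset.mem_insert, Finset.notMem_empty,
          iff_false, not_and]
        rintro (rfl | haM) hax
        · exact hvX hax
        · exact hdisjMX a haM hax
      have := hMmax _ hmem
      rw [Finset.card_insert_of_notMem hvM] at this
      omega
    have := hrange (insert v M)
    omega
  -- posimodularity
  have hpos' := hpos (insert v X) (insert v M)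
  have e1 : (insert v X) \ (insert v M) = X := by
    ext a
    simp only [Finset.mem_sdiff, Finset.mem_insert, not_or]
    constructor
    · rintro ⟨rfl | haX, hne, _⟩
      · exact absurd rfl hne
      · exact haX
    · intro haX
      exact ⟨Or.inr haX, fun h => hvX (h ▸ haX), fun h => hdisjMX a h haX⟩
  have e2 : (insert v M) \ (insert v X) = M := by
    ext a
    simp only [Finset.mem_sdiff, Finset.mem_insert, not_or]
    constructor
    · rintro ⟨rfl | haM, hne, _⟩
      · exact absurd rfl hne
      · exact haM
    · intro haM
      exact ⟨Or.inr haM, fun h => hvM (h ▸ haM), fun h => hdisjMX a haM h⟩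
  rw [e1, e2, hXval, hMval] at hpos'
  have hub := hrange (insert v X)
  refine ⟨v, ?_, ?_⟩
  · simp only [Finset.mem_sdiff, Finset.mem_univ, Finset.mem_union, true_and, not_or]
    exact ⟨hvS, hvX⟩
  · omega
end

section
/- Let V be a finite set with n = |V| ≥ 2d − 2 for an integer d ≥ 2, define g(X) = min(|X|, d−1), and for S ⊆ V with |S| ≥ n − d + 1 define g_S(X) = g(X) for X ≠ S and g_S(S) = d. Then g_S is posimodular. -/
private lemma stmt_18_aux (V : Type*) [Fintype V] [DecidableEq V] (d : ℕ) (hd : 2 ≤ d)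
    (hn : 2 * d - 2 ≤ Fintype.card V)
    (S : Finset V) (hS : Fintype.card V - d + 1 ≤ S.card)
    (gS : Finset V → ℝ)
    (hgS : ∀ X : Finset V,
      gS X = if X = S then (d : ℝ) else min (X.card : ℝ) ((d : ℝ) - 1))
    (X Y : Finset V) (hXY : X \ Y = S) :
    gS X + gS Y ≥ gS (X \ Y) + gS (Y \ X) := by
  have hdn : d ≤ Fintype.card V := by omega
  have hS1 : d - 1 ≤ S.card := by omega
  have hSpos : 0 < S.card := by omega
  have hSne : S.Nonempty := Finset.card_pos.mp hSpos
  have hdisj : Disjoint S Y := by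
    rw [← hXY]; exact Finset.sdiff_disjoint
  have hYneS : Y ≠ S := by
    rintro rfl
    exact hSne.ne_empty (by simpa using disjoint_self.mp hdisj)
  have hYXneS : Y \ X ≠ S := by
    intro h
    have hsub : S ⊆ Y := h ▸ Finset.sdiff_subset
    obtain ⟨x, hx⟩ := hSne
    exact (Finset.disjoint_left.mp hdisj hx) (hsub hx)
  rw [hgS X, hgS Y, hgS (X \ Y), hgS (Y \ X), if_pos hXY, if_neg hYneS, if_neg hYXneS]
  by_cases hXS : X = S
  · rw [if_pos hXS]
    have hmono : (Y \ X).card ≤ Y.card := Finset.card_le_card Finset.sdiff_subset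
    have : min ((Y \ X).card : ℝ) ((d : ℝ) - 1) ≤ min (Y.card : ℝ) ((d : ℝ) - 1) :=
      min_le_min (by exact_mod_cast hmono) le_rfl
    linarith
  · rw [if_neg hXS]
    have hSX : S ⊆ X := hXY ▸ Finset.sdiff_subset
    have hcardX : d ≤ X.card := by
      have : S.card < X.card := Finset.card_lt_card (hSX.ssubset_of_ne (Ne.symm hXS))
      omega
    have hX' : min ((X.card : ℝ)) ((d : ℝ) - 1) = (d : ℝ) - 1 := by
      apply min_eq_right
      have : (d : ℝ) ≤ X.card := by exact_mod_cast hcardX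
      linarith
    -- |Y| ≤ d - 1
    have hcardY : Y.card + 1 ≤ d := by
      have hun : S.card + Y.card ≤ Fintype.card V := by
        rw [← Finset.card_union_of_disjoint hdisj]
        exact Finset.card_le_univ _
      omega
    have hY' : min ((Y.card : ℝ)) ((d : ℝ) - 1) = (Y.card : ℝ) := by
      apply min_eq_left
      have : ((Y.card : ℝ)) + 1 ≤ (d : ℝ) := by exact_mod_cast hcardY
      linarith
    -- X ∩ Y nonempty
    have hXint : X ∩ Y ≠ ∅ := by
      intro h
      apply hXS
      rw [← hXY, Finset.sdiff_eq_self_iff_disjoint.mpr]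
      rwa [Finset.disjoint_iff_inter_eq_empty]
    have hYX1 : (Y \ X).card + 1 ≤ Y.card := by
      have h1 : (Y \ X).card + (Y ∩ X).card = Y.card := Finset.card_sdiff_add_card_inter Y X
      have h2 : (Y ∩ X).card ≠ 0 := by
        rw [Finset.inter_comm]
        simpa [Finset.card_eq_zero] using hXint
      omega
    have hmin : min (((Y \ X).card : ℝ)) ((d : ℝ) - 1) ≤ ((Y \ X).card : ℝ) := min_le_left _ _
    have hYX1' : ((Y \ X).card : ℝ) + 1 ≤ (Y.card : ℝ) := by exact_mod_cast hYX1
    rw [hX', hY']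
    linarith

theorem stmt_18 (V : Type*) [Fintype V] [DecidableEq V] (d : ℕ) (hd : 2 ≤ d)
    (hn : 2 * d - 2 ≤ Fintype.card V)
    (S : Finset V) (hS : Fintype.card V - d + 1 ≤ S.card)
    (gS : Finset V → ℝ)
    (hgS : ∀ X : Finset V,
      gS X = if X = S then (d : ℝ) else min (X.card : ℝ) ((d : ℝ) - 1)) :
    ∀ X Y : Finset V, gS X + gS Y ≥ gS (X \ Y) + gS (Y \ X) := by
  intro X Y
  by_cases hXY : X \ Y = S
  · exact stmt_18_aux V d hd hn S hS gS hgS X Y hXY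
  · by_cases hYX : Y \ X = S
    · have := stmt_18_aux V d hd hn S hS gS hgS Y X hYX
      linarith
    · rw [hgS X, hgS Y, hgS (X \ Y), hgS (Y \ X), if_neg hXY, if_neg hYX]
      have key : ∀ A B : Finset V,
          (if A = S then (d : ℝ) else min (A.card : ℝ) ((d : ℝ) - 1)) ≥
            min (((A \ B).card : ℝ)) ((d : ℝ) - 1) := by
        intro A B
        split_ifs with h
        · have h1 : min (((A \ B).card : ℝ)) ((d : ℝ) - 1) ≤ (d : ℝ) - 1 := min_le_right _ _
          have : (0:ℝ) ≤ d := by positivity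
          linarith
        · have hmono : (A \ B).card ≤ A.card := Finset.card_le_card Finset.sdiff_subset
          exact min_le_min (by exact_mod_cast hmono) le_rfl
      have h1 := key X Y
      have h2 := key Y X
      linarith
end
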